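/- Every delay-free principal left ideal of R = A[z;σ] has a unique generator that is left-reduced and normalized (each nonzero component e_k·g has a primitive idempotent as leading z-coefficient). -/

import Mathlib

open Polynomial

/-- The skew multiplication of A[z;σ]: a*z = z*σ(a). -/
noncomputable def skewMul {F A : Type*} [CommRing F] [CommRing A] [Algebra F A]
    (σ : A ≃ₐ[F] A) (g h : Polynomial A) : Polynomial A :=
  ∑ ν ∈ g.support, ∑ μ ∈ h.support,
    Polynomial.monomial (ν + μ) ((σ ^ μ) (g.coeff ν) * h.coeff μ)

/-- m is the leading monomial z^{deg f} e_j of f (j the largest index with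
e_j · leadingCoeff f ≠ 0), with respect to the term-over-position order. -/
def IsLM {A : Type*} [CommRing A] {r : ℕ} (e : Fin r → A) (f m : Polynomial A) : Prop :=
  ∃ j : Fin r, m = Polynomial.monomial f.natDegree (e j) ∧
    e j * f.leadingCoeff ≠ 0 ∧ ∀ l : Fin r, j < l → e l * f.leadingCoeff = 0

/-- g is left-reduced: for k ≠ l, no nonzero term z^μ e_j · (e_k g)_μ of the component
e_k·g is right divisible by the leading monomial of the component e_l·g. -/
def LeftReduced {F A : Type*} [CommRing F] [CommRing A] [Algebra F A] {r : ℕ}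
    (σ : A ≃ₐ[F] A) (e : Fin r → A) (g : Polynomial A) : Prop :=
  ∀ k l : Fin r, k ≠ l →
    skewMul σ (Polynomial.C (e k)) g ≠ 0 → skewMul σ (Polynomial.C (e l)) g ≠ 0 →
    ∀ (μ : ℕ) (j : Fin r),
      e j * (skewMul σ (Polynomial.C (e k)) g).coeff μ ≠ 0 →
      ∀ m : Polynomial A, IsLM e (skewMul σ (Polynomial.C (e l)) g) m →
        ¬ ∃ h : Polynomial A,
          Polynomial.monomial μ (e j * (skewMul σ (Polynomial.C (e k)) g).coeff μ)
            = skewMul σ h m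

/-- g is normalized: each nonzero component e_k·g has a primitive idempotent as its
leading z-coefficient. -/
def Normalized {F A : Type*} [CommRing F] [CommRing A] [Algebra F A] {r : ℕ}
    (σ : A ≃ₐ[F] A) (e : Fin r → A) (g : Polynomial A) : Prop :=
  ∀ k : Fin r, skewMul σ (Polynomial.C (e k)) g ≠ 0 →
    ∃ j : Fin r, (skewMul σ (Polynomial.C (e k)) g).leadingCoeff = e j

/-!
Write `e k * g` for the components of `g`. Since `σ (e k) = e (π k)`, the coefficient of `z ^ n`
in `e k * g` lies in the corner `e (π ^ n k) * A`, a field; so the leading monomial of `e k * g`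
is `z ^ d * e (π ^ d k)`.

Uniqueness. If `g` is reduced and normalized, its components have leading monomials in pairwise
distinct positions, so no cancellation can occur among the leading terms of
`u * g = ∑ l, (u * e l) * (e l * g)`: the leading term of every nonzero element of the ideal is
divisible by the leading monomial of a component of `g`. For two reduced normalized generators
this forces equal leading monomials of the components, and then a nonzero component of the
difference, having smaller degree, would exhibit a reducible term in one of them.

Existence. Weigh a generator by `∑ k, ∑ n ∈ support (e k * g), 2 ^ n` and take one of minimal
weight. Rescaling by a unit of `A` normalizes it without changing those supports. A term of degree
`μ` of `e k * g` divisible by the leading monomial of `e l * g`, `l ≠ k`, is cancelled by passing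
to `(1 - z ^ a γ) * g` for suitable `γ ∈ e l * A`; this is again a generator because
`(z ^ a γ) ^ 2 = 0`, and it only changes terms of `e k * g` of degree at most `μ`, removing the one
of degree `μ`, so the weight drops. Hence the minimal generator is reduced.
-/

open Finset.HasAntidiagonal

theorem Polynomial.natDegree_eq_of_support_eq {R : Type*} [Semiring R] {p q : R[X]}
    (h : p.support = q.support) : p.natDegree = q.natDegree := by
  simp only [natDegree, degree, h]

theorem Polynomial.sum_two_pow_support_lt {R : Type*} [Semiring R] {p q : R[X]} {μ : ℕ}
    (hq : q.coeff μ ≠ 0) (hp : p.coeff μ = 0) (h : ∀ n, μ < n → p.coeff n = q.coeff n) :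
    ∑ n ∈ p.support, 2 ^ n < ∑ n ∈ q.support, 2 ^ n := by
  rw [Finset.geomSum_lt_geomSum_iff_toColex_lt_toColex le_rfl,
    Finset.Colex.toColex_lt_toColex_iff_exists_forall_lt]
  refine ⟨μ, mem_support_iff.mpr hq, fun hμ => mem_support_iff.mp hμ hp, fun n hn hnq => ?_⟩
  by_contra hle
  rcases (not_lt.mp hle).lt_or_eq with hlt | rfl
  · exact hnq (mem_support_iff.mpr (h n hlt ▸ mem_support_iff.mp hn))
  · exact mem_support_iff.mp hn hp

section SkewMul

variable {F A : Type*} [CommRing F] [CommRing A] [Algebra F A] (σ : A ≃ₐ[F] A)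

theorem skewMul_eq_sum (f g : A[X]) :
    skewMul σ f g = f.sum fun ν a => g.sum fun μ b => monomial (ν + μ) ((σ ^ μ) a * b) :=
  rfl

theorem skewMul_zero_left (g : A[X]) : skewMul σ 0 g = 0 := by
  simp [skewMul_eq_sum]

theorem skewMul_zero_right (f : A[X]) : skewMul σ f 0 = 0 := by
  simp [skewMul_eq_sum, Polynomial.sum_def]

theorem skewMul_add_left (f f' g : A[X]) :
    skewMul σ (f + f') g = skewMul σ f g + skewMul σ f' g := by
  simp only [skewMul_eq_sum]
  exact sum_add_index _ _ _ (by simp [Polynomial.sum_def]) (by simp [add_mul, sum_add])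

theorem skewMul_add_right (f g g' : A[X]) :
    skewMul σ f (g + g') = skewMul σ f g + skewMul σ f g' := by
  simp only [skewMul_eq_sum, ← sum_add]
  exact Finset.sum_congr rfl fun ν _ => sum_add_index _ _ _ (by simp) (by simp [mul_add])

theorem skewMul_sub_left (f f' g : A[X]) :
    skewMul σ (f - f') g = skewMul σ f g - skewMul σ f' g :=
  eq_sub_of_add_eq (by rw [← skewMul_add_left, sub_add_cancel])

theorem skewMul_sub_right (f g g' : A[X]) :
    skewMul σ f (g - g') = skewMul σ f g - skewMul σ f g' :=
  eq_sub_of_add_eq (by rw [← skewMul_add_right, sub_add_cancel])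

theorem skewMul_sum_left {ι : Type*} (s : Finset ι) (f : ι → A[X]) (g : A[X]) :
    skewMul σ (∑ i ∈ s, f i) g = ∑ i ∈ s, skewMul σ (f i) g := by
  induction s using Finset.cons_induction with
  | empty => simp [skewMul_zero_left]
  | cons i s hi ih => rw [Finset.sum_cons, skewMul_add_left, ih, Finset.sum_cons]

theorem skewMul_sum_right {ι : Type*} (s : Finset ι) (f : A[X]) (g : ι → A[X]) :
    skewMul σ f (∑ i ∈ s, g i) = ∑ i ∈ s, skewMul σ f (g i) := by
  induction s using Finset.cons_induction with
  | empty => simp [skewMul_zero_right]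
  | cons i s hi ih => rw [Finset.sum_cons, skewMul_add_right, ih, Finset.sum_cons]

theorem skewMul_monomial_monomial (a c : ℕ) (b d : A) :
    skewMul σ (monomial a b) (monomial c d) = monomial (a + c) ((σ ^ c) b * d) := by
  simp [skewMul_eq_sum, sum_monomial_index]

theorem skewMul_C_C (a b : A) : skewMul σ (C a) (C b) = C (a * b) := by
  simpa using skewMul_monomial_monomial σ 0 0 a b

theorem skewMul_assoc (f g h : A[X]) :
    skewMul σ (skewMul σ f g) h = skewMul σ f (skewMul σ g h) := by
  induction f using Polynomial.induction_on' with
  | add p q hp hq => simp only [skewMul_add_left, hp, hq]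
  | monomial a b =>
    induction g using Polynomial.induction_on' with
    | add p q hp hq => simp only [skewMul_add_right, skewMul_add_left, hp, hq]
    | monomial c d =>
      induction h using Polynomial.induction_on' with
      | add p q hp hq => simp only [skewMul_add_right, hp, hq]
      | monomial p q =>
        simp only [skewMul_monomial_monomial, map_mul, ← AlgEquiv.mul_apply, ← pow_add,
          add_comm p c, mul_assoc, add_assoc]

theorem coeff_skewMul (f g : A[X]) (n : ℕ) :
    (skewMul σ f g).coeff n = ∑ x ∈ antidiagonal n, (σ ^ x.2) (f.coeff x.1) * g.coeff x.2 := by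
  induction f using Polynomial.induction_on' with
  | add p q hp hq =>
    simp only [skewMul_add_left, coeff_add, hp, hq, map_add, add_mul, Finset.sum_add_distrib]
  | monomial a b =>
    induction g using Polynomial.induction_on' with
    | add p q hp hq =>
      simp only [skewMul_add_right, coeff_add, hp, hq, mul_add, Finset.sum_add_distrib]
    | monomial c d =>
      have hterm : ∀ x : ℕ × ℕ, (σ ^ x.2) ((monomial a b).coeff x.1) * (monomial c d).coeff x.2 =
          if (a, c) = x then (σ ^ c) b * d else 0 := by
        rintro ⟨x₁, x₂⟩
        by_cases h₁ : a = x₁ <;> by_cases h₂ : c = x₂ <;> simp [coeff_monomial, h₁, h₂]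
      rw [skewMul_monomial_monomial, Finset.sum_congr rfl fun x _ => hterm x, Finset.sum_ite_eq,
        coeff_monomial]
      simp only [mem_antidiagonal]

theorem coeff_skewMul_C_left (a : A) (g : A[X]) (n : ℕ) :
    (skewMul σ (C a) g).coeff n = (σ ^ n) a * g.coeff n := by
  rw [coeff_skewMul, Finset.sum_eq_single (0, n) (fun x hx hne => ?_) (by simp)]
  · simp
  · rw [mem_antidiagonal] at hx
    rw [coeff_C, if_neg (fun h => hne (Prod.ext h (by omega))), map_zero, zero_mul]

theorem coeff_skewMul_monomial_right (f : A[X]) (d : ℕ) (c : A) (n : ℕ) :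
    (skewMul σ f (monomial d c)).coeff n =
      if d ≤ n then (σ ^ d) (f.coeff (n - d)) * c else 0 := by
  rw [coeff_skewMul]
  split_ifs with hdn
  · rw [Finset.sum_eq_single (n - d, d) (fun x hx hne => ?_) (by simp [hdn])]
    · simp
    · rw [mem_antidiagonal] at hx
      rw [coeff_monomial, if_neg (fun h => hne (Prod.ext (by omega) h.symm)), mul_zero]
  · refine Finset.sum_eq_zero fun x hx => ?_
    rw [mem_antidiagonal] at hx
    rw [coeff_monomial, if_neg (by omega), mul_zero]

theorem coeff_skewMul_C_right (f : A[X]) (a : A) (n : ℕ) :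
    (skewMul σ f (C a)).coeff n = f.coeff n * a := by
  simp [← monomial_zero_left, coeff_skewMul_monomial_right]

theorem skewMul_one_left (g : A[X]) : skewMul σ 1 g = g := by
  ext n
  rw [← C_1, coeff_skewMul_C_left, map_one, one_mul]

theorem skewMul_one_right (f : A[X]) : skewMul σ f 1 = f := by
  ext n
  rw [← C_1, coeff_skewMul_C_right, mul_one]

theorem natDegree_skewMul_le_of_le {f g : A[X]} {m n : ℕ} (hf : f.natDegree ≤ m)
    (hg : g.natDegree ≤ n) : (skewMul σ f g).natDegree ≤ m + n := by
  refine natDegree_le_iff_coeff_eq_zero.mpr fun k hk => ?_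
  rw [coeff_skewMul]
  refine Finset.sum_eq_zero fun x hx => ?_
  rw [mem_antidiagonal] at hx
  rcases lt_or_ge m x.1 with h | h
  · rw [coeff_eq_zero_of_natDegree_lt (hf.trans_lt h), map_zero, zero_mul]
  · rw [coeff_eq_zero_of_natDegree_lt (hg.trans_lt (by omega)), mul_zero]

theorem coeff_skewMul_of_natDegree_le {f g : A[X]} {m n : ℕ} (hf : f.natDegree ≤ m)
    (hg : g.natDegree ≤ n) :
    (skewMul σ f g).coeff (m + n) = (σ ^ n) (f.coeff m) * g.coeff n := by
  rw [coeff_skewMul, Finset.sum_eq_single (m, n) (fun x hx hne => ?_) (by simp)]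
  rw [mem_antidiagonal] at hx
  rcases lt_or_ge m x.1 with h | h
  · rw [coeff_eq_zero_of_natDegree_lt (hf.trans_lt h), map_zero, zero_mul]
  · rw [coeff_eq_zero_of_natDegree_lt (hg.trans_lt ?_), mul_zero]
    by_contra h'
    exact hne (Prod.ext (by omega) (by omega))

theorem exists_monomial_eq_skewMul_monomial_iff {μ d : ℕ} {a c : A} (hc : c ≠ 0) :
    (∃ h, monomial μ c = skewMul σ h (monomial d a)) ↔ d ≤ μ ∧ ∃ b, c = b * a := by
  constructor
  · rintro ⟨h, hh⟩
    have hμ := congrArg (coeff · μ) hh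
    simp only [coeff_monomial_same, coeff_skewMul_monomial_right] at hμ
    split_ifs at hμ with hdμ
    · exact ⟨hdμ, _, hμ⟩
    · exact absurd hμ hc
  · rintro ⟨hdμ, b, rfl⟩
    refine ⟨monomial (μ - d) ((σ ^ d).symm b), ?_⟩
    rw [skewMul_monomial_monomial, AlgEquiv.apply_symm_apply, Nat.sub_add_cancel hdμ]

def skewSpan (g : A[X]) : Set A[X] := {f | ∃ u, f = skewMul σ u g}

theorem mem_skewSpan_self (g : A[X]) : g ∈ skewSpan σ g :=
  ⟨1, (skewMul_one_left σ g).symm⟩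

theorem skewMul_mem_skewSpan {f g : A[X]} (hf : f ∈ skewSpan σ g) (v : A[X]) :
    skewMul σ v f ∈ skewSpan σ g := by
  obtain ⟨u, rfl⟩ := hf
  exact ⟨skewMul σ v u, (skewMul_assoc σ v u g).symm⟩

theorem sub_mem_skewSpan {f f' g : A[X]} (hf : f ∈ skewSpan σ g) (hf' : f' ∈ skewSpan σ g) :
    f - f' ∈ skewSpan σ g := by
  obtain ⟨u, rfl⟩ := hf
  obtain ⟨u', rfl⟩ := hf'
  exact ⟨u - u', (skewMul_sub_left σ u u' g).symm⟩

theorem skewSpan_skewMul_of_mul_eq_one {u v : A[X]} (huv : skewMul σ u v = 1) (g : A[X]) :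
    skewSpan σ (skewMul σ v g) = skewSpan σ g := by
  ext f
  constructor
  · rintro ⟨w, rfl⟩
    exact ⟨skewMul σ w v, (skewMul_assoc σ w v g).symm⟩
  · rintro ⟨w, rfl⟩
    refine ⟨skewMul σ w u, ?_⟩
    rw [skewMul_assoc, ← skewMul_assoc σ u, huv, skewMul_one_left]

theorem skewSpan_sub_skewMul {t : A[X]} (ht : skewMul σ t t = 0) (g : A[X]) :
    skewSpan σ (g - skewMul σ t g) = skewSpan σ g := by
  rw [← skewSpan_skewMul_of_mul_eq_one σ (u := 1 + t) (v := 1 - t) ?_ g, skewMul_sub_left,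
    skewMul_one_left]
  simp only [skewMul_sub_right, skewMul_add_left, skewMul_one_right, skewMul_one_left, ht]
  abel

end SkewMul

/-- `A ≅ ∏ⱼ eⱼ A` with every corner `eⱼ A` a field, and `σ` permuting the factors along `π`. -/
structure FieldSplitting (F A : Type*) [CommRing F] [CommRing A] [Algebra F A] (r : ℕ) where
  σ : A ≃ₐ[F] A
  e : Fin r → A
  complete : CompleteOrthogonalIdempotents e
  π : Equiv.Perm (Fin r)
  map_e : ∀ k, σ (e k) = e (π k)
  exists_inv : ∀ j x, e j * x = x → x ≠ 0 → ∃ y, e j * y = y ∧ y * x = e j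

namespace FieldSplitting

variable {F A : Type*} [CommRing F] [CommRing A] [Algebra F A] {r : ℕ} (S : FieldSplitting F A r)

theorem e_mul_self (j : Fin r) : S.e j * S.e j = S.e j := (S.complete.idem j).eq

theorem e_mul_e_of_ne {j k : Fin r} (h : j ≠ k) : S.e j * S.e k = 0 := S.complete.ortho h

theorem pow_map_e (μ : ℕ) (k : Fin r) : (S.σ ^ μ) (S.e k) = S.e ((S.π ^ μ) k) := by
  induction μ generalizing k with
  | zero => simp
  | succ n ih => rw [pow_succ, pow_succ, AlgEquiv.mul_apply, S.map_e, ih, Equiv.Perm.mul_apply]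

theorem e_mul_eq_zero_of_ne {a b : Fin r} {x : A} (hx : S.e a * x = x) (hb : b ≠ a) :
    S.e b * x = 0 := by
  rw [← hx, ← mul_assoc, S.e_mul_e_of_ne hb, zero_mul]

theorem eq_of_e_mul_ne_zero {a b : Fin r} {x : A} (ha : S.e a * x ≠ 0) (hb : S.e b * x = x) :
    a = b :=
  by_contra fun hab => ha (S.e_mul_eq_zero_of_ne hb hab)

theorem mul_eq_zero_of_e_mul {a b : Fin r} {x y : A} (hx : S.e a * x = x) (hy : S.e b * y = y)
    (hab : a ≠ b) : x * y = 0 := by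
  rw [← hx, mul_comm (S.e a), mul_assoc, S.e_mul_eq_zero_of_ne hy hab, mul_zero]

theorem e_mul_pow_map {a : Fin r} {x : A} (hx : S.e a * x = x) (μ : ℕ) :
    S.e ((S.π ^ μ) a) * (S.σ ^ μ) x = (S.σ ^ μ) x := by
  rw [← S.pow_map_e, ← map_mul, hx]

theorem e_mul_pow_symm {a : Fin r} {x : A} {μ : ℕ} (hx : S.e ((S.π ^ μ) a) * x = x) :
    S.e a * (S.σ ^ μ).symm x = (S.σ ^ μ).symm x :=
  (S.σ ^ μ).injective (by rw [map_mul, S.pow_map_e, AlgEquiv.apply_symm_apply, hx])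

theorem sum_mul_of_e_mul {y : Fin r → A} (hy : ∀ j, S.e j * y j = y j) {k : Fin r} {x : A}
    (hx : S.e k * x = x) : (∑ j, y j) * x = y k * x := by
  rw [Finset.sum_mul, Finset.sum_eq_single k (fun j _ hj => S.mul_eq_zero_of_e_mul (hy j) hx hj)
    (by simp)]

theorem exists_isUnit_mul_eq (x : Fin r → A) (hx : ∀ k, S.e k * x k = x k) :
    ∃ b, IsUnit b ∧ ∀ k, x k ≠ 0 → b * x k = S.e k := by
  have hyz : ∀ k, ∃ y z : A, S.e k * y = y ∧ S.e k * z = z ∧ z * y = S.e k ∧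
      (x k ≠ 0 → y * x k = S.e k) := fun k => by
    by_cases h : x k = 0
    · exact ⟨S.e k, S.e k, S.e_mul_self k, S.e_mul_self k, S.e_mul_self k, absurd h⟩
    · obtain ⟨y, hy, hyx⟩ := S.exists_inv k (x k) (hx k) h
      exact ⟨y, x k, hy, hx k, by rw [mul_comm, hyx], fun _ => hyx⟩
  choose y z hy hz hzy hyx using hyz
  refine ⟨∑ k, y k, IsUnit.of_mul_eq_one (∑ k, z k) ?_, fun k hk => ?_⟩
  · rw [Finset.mul_sum, ← S.complete.complete]
    refine Finset.sum_congr rfl fun k _ => ?_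
    rw [S.sum_mul_of_e_mul hy (hz k), mul_comm, hzy]
  · rw [S.sum_mul_of_e_mul hy (hx k), hyx k hk]

/-! ### Components and leading monomials -/

noncomputable def proj (k : Fin r) (g : A[X]) : A[X] := skewMul S.σ (C (S.e k)) g

theorem coeff_proj (k : Fin r) (g : A[X]) (n : ℕ) :
    (S.proj k g).coeff n = S.e ((S.π ^ n) k) * g.coeff n := by
  rw [proj, coeff_skewMul_C_left, S.pow_map_e]

theorem e_mul_coeff_proj (k : Fin r) (g : A[X]) (n : ℕ) :
    S.e ((S.π ^ n) k) * (S.proj k g).coeff n = (S.proj k g).coeff n := by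
  rw [coeff_proj, ← mul_assoc, S.e_mul_self]

theorem proj_sub (k : Fin r) (g g' : A[X]) : S.proj k (g - g') = S.proj k g - S.proj k g' :=
  skewMul_sub_right _ _ _ _

theorem proj_proj (k l : Fin r) (g : A[X]) :
    S.proj k (S.proj l g) = if k = l then S.proj l g else 0 := by
  rw [proj, proj, ← skewMul_assoc, skewMul_C_C]
  split_ifs with h
  · rw [h, S.e_mul_self]
  · rw [S.e_mul_e_of_ne h, C_0, skewMul_zero_left]

theorem sum_proj (g : A[X]) : ∑ k, S.proj k g = g := by
  simp only [proj]
  rw [← skewMul_sum_left, ← map_sum, S.complete.complete, C_1, skewMul_one_left]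

theorem eq_zero_of_forall_proj {g : A[X]} (h : ∀ k, S.proj k g = 0) : g = 0 := by
  rw [← S.sum_proj g]
  exact Finset.sum_eq_zero fun k _ => h k

theorem proj_skewMul_C (b : A) (g : A[X]) (k : Fin r) :
    S.proj k (skewMul S.σ (C b) g) = skewMul S.σ (C b) (S.proj k g) := by
  simp only [proj, ← skewMul_assoc, skewMul_C_C, mul_comm]

/-- The index `j` of the leading monomial `z ^ d * e j` of the component `e k * g`. -/
noncomputable def lmIndex (g : A[X]) (k : Fin r) : Fin r := (S.π ^ (S.proj k g).natDegree) k

theorem e_lmIndex_mul_leadingCoeff (g : A[X]) (k : Fin r) :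
    S.e (S.lmIndex g k) * (S.proj k g).leadingCoeff = (S.proj k g).leadingCoeff :=
  S.e_mul_coeff_proj k g _

theorem lmIndex_eq_of_natDegree_eq {g g' : A[X]} {l : Fin r}
    (h : (S.proj l g).natDegree = (S.proj l g').natDegree) : S.lmIndex g l = S.lmIndex g' l := by
  rw [lmIndex, lmIndex, h]

/-- The term of degree `μ` of `e k * g` is right divisible by the leading monomial of `e l * g`. -/
def Reducible (g : A[X]) (k l : Fin r) (μ : ℕ) : Prop :=
  k ≠ l ∧ (S.proj k g).coeff μ ≠ 0 ∧ S.proj l g ≠ 0 ∧ (S.proj l g).natDegree ≤ μ ∧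
    (S.π ^ μ) k = S.lmIndex g l

def IsReduced (g : A[X]) : Prop := ∀ k l μ, ¬ S.Reducible g k l μ

def IsNormalized (g : A[X]) : Prop :=
  ∀ k, S.proj k g ≠ 0 → (S.proj k g).leadingCoeff = S.e (S.lmIndex g k)

theorem lmIndex_injective {g : A[X]} (hg : S.IsReduced g) {l l' : Fin r} (hl : S.proj l g ≠ 0)
    (hl' : S.proj l' g ≠ 0) (h : S.lmIndex g l = S.lmIndex g l') : l = l' := by
  by_contra hne
  rcases le_total (S.proj l g).natDegree (S.proj l' g).natDegree with hle | hle
  · exact hg l' l _ ⟨Ne.symm hne, leadingCoeff_ne_zero.mpr hl', hl, hle, h.symm⟩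
  · exact hg l l' _ ⟨hne, leadingCoeff_ne_zero.mpr hl, hl', hle, h⟩

/-! ### Predictable leading terms and uniqueness -/

theorem exists_natDegree_sum_eq {ι : Type*} {L : Finset ι} (hL : L.Nonempty) {t : ι → A[X]}
    {D : ι → ℕ} {j : ι → Fin r} (hj : Set.InjOn j L) (hdeg : ∀ i ∈ L, (t i).natDegree ≤ D i)
    (htop : ∀ i ∈ L, (t i).coeff (D i) ≠ 0)
    (he : ∀ i ∈ L, S.e (j i) * (t i).coeff (D i) = (t i).coeff (D i)) :
    ∃ i ∈ L, (∑ i ∈ L, t i).natDegree = D i ∧ S.e (j i) * (∑ i ∈ L, t i).leadingCoeff ≠ 0 := by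
  obtain ⟨i₀, hi₀, hmax⟩ := L.exists_max_image D hL
  have hcoeff : S.e (j i₀) * (∑ i ∈ L, t i).coeff (D i₀) = (t i₀).coeff (D i₀) := by
    rw [finsetSum_coeff, Finset.mul_sum, Finset.sum_eq_single_of_mem i₀ hi₀ fun i hi hne => ?_,
      he i₀ hi₀]
    rcases (hmax i hi).lt_or_eq with hlt | heq
    · rw [coeff_eq_zero_of_natDegree_lt ((hdeg i hi).trans_lt hlt), mul_zero]
    · rw [← heq]
      exact S.e_mul_eq_zero_of_ne (he i hi) fun h => hne (hj hi hi₀ h.symm)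
  have hdeg₀ : (∑ i ∈ L, t i).natDegree = D i₀ :=
    le_antisymm (natDegree_sum_le_of_forall_le L t fun i hi => (hdeg i hi).trans (hmax i hi))
      (le_natDegree_of_ne_zero fun h => htop i₀ hi₀ (by rw [← hcoeff, h, mul_zero]))
  refine ⟨i₀, hi₀, hdeg₀, ?_⟩
  rw [leadingCoeff, hdeg₀, hcoeff]
  exact htop i₀ hi₀

theorem skewMul_eq_sum_proj (u g : A[X]) :
    skewMul S.σ u g = ∑ l, skewMul S.σ (skewMul S.σ u (C (S.e l))) (S.proj l g) := by
  conv_lhs => rw [← S.sum_proj g, skewMul_sum_right]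
  refine Finset.sum_congr rfl fun l _ => ?_
  have h := S.proj_proj l l g
  rw [if_pos rfl] at h
  rw [skewMul_assoc]
  exact congrArg _ h.symm

theorem coeff_skewMul_proj_natDegree_add {g : A[X]} (hg : S.IsNormalized g) {l : Fin r}
    (hl : S.proj l g ≠ 0) {v : A[X]} (hv : S.e l * v.leadingCoeff = v.leadingCoeff) :
    (skewMul S.σ v (S.proj l g)).coeff (v.natDegree + (S.proj l g).natDegree) =
      (S.σ ^ (S.proj l g).natDegree) v.leadingCoeff := by
  rw [coeff_skewMul_of_natDegree_le _ le_rfl le_rfl, coeff_natDegree, coeff_natDegree, hg l hl,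
    mul_comm, lmIndex, S.e_mul_pow_map hv]

/-- The leading monomial of `u * g` is right divisible by the leading monomial
`z ^ d * e (lmIndex g l)` of some component of `g`. -/
theorem exists_lm_dvd_skewMul {g : A[X]} (hred : S.IsReduced g) (hnor : S.IsNormalized g)
    {u : A[X]} (hu : skewMul S.σ u g ≠ 0) :
    ∃ l, S.proj l g ≠ 0 ∧ (S.proj l g).natDegree ≤ (skewMul S.σ u g).natDegree ∧
      S.e (S.lmIndex g l) * (skewMul S.σ u g).leadingCoeff ≠ 0 := by
  classical
  set v : Fin r → A[X] := fun l => skewMul S.σ u (C (S.e l))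
  have hv : ∀ l, S.e l * (v l).leadingCoeff = (v l).leadingCoeff := fun l => by
    rw [leadingCoeff, coeff_skewMul_C_right, mul_comm, mul_assoc, S.e_mul_self]
  set L := Finset.univ.filter fun l => v l ≠ 0 ∧ S.proj l g ≠ 0
  have hL : ∀ {l}, l ∈ L → v l ≠ 0 ∧ S.proj l g ≠ 0 := fun hl => (Finset.mem_filter.mp hl).2
  have hsum : skewMul S.σ u g = ∑ l ∈ L, skewMul S.σ (v l) (S.proj l g) := by
    refine (S.skewMul_eq_sum_proj u g).trans (Finset.sum_subset (Finset.subset_univ L)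
      fun l _ hl => ?_).symm
    by_cases h : v l = 0
    · exact (congrArg (skewMul S.σ · _) h).trans (skewMul_zero_left _ _)
    · exact (congrArg (skewMul S.σ _) (by simpa [L, h] using hl)).trans (skewMul_zero_right _ _)
  have hLne : L.Nonempty := Finset.nonempty_iff_ne_empty.mpr fun h =>
    hu (by rw [hsum, h, Finset.sum_empty])
  obtain ⟨l, hl, hdeg, hlc⟩ := S.exists_natDegree_sum_eq hLne (j := S.lmIndex g)
    (fun l hl l' hl' h => S.lmIndex_injective hred (hL hl).2 (hL hl').2 h)
    (fun l _ => natDegree_skewMul_le_of_le _ le_rfl le_rfl)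
    (fun l hl => by
      rw [S.coeff_skewMul_proj_natDegree_add hnor (hL hl).2 (hv l)]
      exact (map_ne_zero_iff _ (S.σ ^ _).injective).mpr (leadingCoeff_ne_zero.mpr (hL hl).1))
    (fun l hl => by
      rw [S.coeff_skewMul_proj_natDegree_add hnor (hL hl).2 (hv l)]
      exact S.e_mul_pow_map (hv l) _)
  rw [← hsum] at hdeg hlc
  exact ⟨l, (hL hl).2, hdeg ▸ Nat.le_add_left _ _, hlc⟩

theorem exists_lmIndex_eq_of_mem {g h : A[X]} (hred : S.IsReduced g) (hnor : S.IsNormalized g)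
    (hmem : h ∈ skewSpan S.σ g) {k : Fin r} (hk : S.proj k h ≠ 0) :
    ∃ l, S.proj l g ≠ 0 ∧ (S.proj l g).natDegree ≤ (S.proj k h).natDegree ∧
      S.lmIndex g l = S.lmIndex h k := by
  obtain ⟨u, hu : S.proj k h = _⟩ := skewMul_mem_skewSpan S.σ hmem (C (S.e k))
  have hlm := S.e_lmIndex_mul_leadingCoeff h k
  rw [hu] at hk hlm ⊢
  obtain ⟨l, hl, hdeg, hlc⟩ := S.exists_lm_dvd_skewMul hred hnor hk
  exact ⟨l, hl, hdeg, S.eq_of_e_mul_ne_zero hlc hlm⟩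

theorem proj_ne_zero_and_natDegree_eq {g g' : A[X]} (hspan : skewSpan S.σ g = skewSpan S.σ g')
    (hred : S.IsReduced g) (hnor : S.IsNormalized g) (hred' : S.IsReduced g')
    (hnor' : S.IsNormalized g') {l : Fin r} (hl : S.proj l g' ≠ 0) :
    S.proj l g ≠ 0 ∧ (S.proj l g).natDegree = (S.proj l g').natDegree := by
  have hg' : g' ∈ skewSpan S.σ g := hspan ▸ mem_skewSpan_self S.σ g'
  have hg : g ∈ skewSpan S.σ g' := hspan ▸ mem_skewSpan_self S.σ g
  obtain ⟨l₁, hl₁, hle₁, hidx₁⟩ := S.exists_lmIndex_eq_of_mem hred hnor hg' hl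
  obtain ⟨l₂, hl₂, hle₂, hidx₂⟩ := S.exists_lmIndex_eq_of_mem hred' hnor' hg hl₁
  obtain rfl : l₂ = l := S.lmIndex_injective hred' hl₂ hl (hidx₂.trans hidx₁)
  have hdeg := le_antisymm hle₁ hle₂
  obtain rfl : l₁ = l₂ := by
    rw [lmIndex, lmIndex, hdeg] at hidx₁
    exact (S.π ^ _).injective hidx₁
  exact ⟨hl₁, hdeg⟩

theorem eq_of_skewSpan_eq {g g' : A[X]} (hspan : skewSpan S.σ g = skewSpan S.σ g')
    (hred : S.IsReduced g) (hnor : S.IsNormalized g) (hred' : S.IsReduced g')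
    (hnor' : S.IsNormalized g') : g = g' := by
  have key l := S.proj_ne_zero_and_natDegree_eq hspan hred hnor hred' hnor' (l := l)
  have key' l := S.proj_ne_zero_and_natDegree_eq hspan.symm hred' hnor' hred hnor (l := l)
  refine sub_eq_zero.mp (S.eq_zero_of_forall_proj fun k => ?_)
  by_contra hw
  have hk' : S.proj k g' ≠ 0 := fun h =>
    hw (by rw [S.proj_sub, h, not_imp_not.mp (fun hk => (key' k hk).1) h, sub_zero])
  obtain ⟨hk, hdeg⟩ := key k hk'
  have hlt : (S.proj k (g - g')).natDegree < (S.proj k g).natDegree := by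
    rw [S.proj_sub] at hw ⊢
    refine natDegree_lt_natDegree hw (degree_sub_lt_left ?_ hk ?_)
    · rw [degree_eq_natDegree hk, degree_eq_natDegree hk', hdeg]
    · rw [hnor k hk, hnor' k hk', S.lmIndex_eq_of_natDegree_eq hdeg]
  have hmem : g - g' ∈ skewSpan S.σ g :=
    sub_mem_skewSpan S.σ (mem_skewSpan_self S.σ g) (hspan ▸ mem_skewSpan_self S.σ g')
  obtain ⟨l, hl, hle, hidx⟩ := S.exists_lmIndex_eq_of_mem hred hnor hmem hw
  have hkl : k ≠ l := by
    rintro rfl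
    omega
  set D := (S.proj k (g - g')).natDegree
  have hcoeff : (S.proj k g).coeff D - (S.proj k g').coeff D ≠ 0 := by
    rw [← coeff_sub, ← S.proj_sub]
    exact leadingCoeff_ne_zero.mpr hw
  by_cases hc : (S.proj k g).coeff D = 0
  · rw [hc, zero_sub, neg_ne_zero] at hcoeff
    obtain ⟨hl', hdeg'⟩ := key' l hl
    exact hred' k l D ⟨hkl, hcoeff, hl', hdeg' ▸ hle,
      hidx.symm.trans (S.lmIndex_eq_of_natDegree_eq hdeg'.symm)⟩
  · exact hred k l D ⟨hkl, hc, hl, hle, hidx.symm⟩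

/-! ### Reduction and existence -/

theorem proj_skewMul_monomial {k : Fin r} {a : ℕ} {γ : A} (hγ : S.e ((S.π ^ a) k) * γ = γ)
    (g : A[X]) (k' : Fin r) :
    S.proj k' (skewMul S.σ (monomial a γ) g) =
      if k' = k then skewMul S.σ (monomial a γ) g else 0 := by
  have hk : skewMul S.σ (C (S.e k)) (monomial a γ) = monomial a γ := by
    rw [← monomial_zero_left, skewMul_monomial_monomial, S.pow_map_e, hγ, zero_add]
  rw [← hk, skewMul_assoc, ← proj, S.proj_proj]

theorem skewMul_monomial_proj {l : Fin r} {a : ℕ} {γ : A} (hγ : S.e l * γ = γ) (g : A[X]) :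
    skewMul S.σ (monomial a γ) (S.proj l g) = skewMul S.σ (monomial a γ) g := by
  rw [proj, ← skewMul_assoc, ← monomial_zero_left, skewMul_monomial_monomial, pow_zero,
    AlgEquiv.one_apply, mul_comm, hγ, add_zero]

theorem exists_reduction_step {g : A[X]} (hnor : S.IsNormalized g) {k l : Fin r} {μ : ℕ}
    (h : S.Reducible g k l μ) :
    ∃ g', skewSpan S.σ g' = skewSpan S.σ g ∧ (∀ k', k' ≠ k → S.proj k' g' = S.proj k' g) ∧
      (∀ n, μ < n → (S.proj k g').coeff n = (S.proj k g).coeff n) ∧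
      (S.proj k g').coeff μ = 0 := by
  obtain ⟨hkl, -, hl, hdμ, hidx⟩ := h
  set d := (S.proj l g).natDegree
  set c := (S.proj k g).coeff μ
  obtain ⟨a, rfl⟩ : ∃ a, μ = d + a := Nat.exists_eq_add_of_le hdμ
  have hπ : (S.π ^ a) k = l := (S.π ^ d).injective (by rwa [← Equiv.Perm.mul_apply, ← pow_add])
  have hc : S.e ((S.π ^ d) l) * c = c := by
    rw [← lmIndex, ← hidx]
    exact S.e_mul_coeff_proj k g _
  set γ := (S.σ ^ d).symm c
  have hγ : S.e l * γ = γ := S.e_mul_pow_symm hc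
  have hne : (S.π ^ a) l ≠ l := fun h => hkl ((S.π ^ a).injective (h.trans hπ.symm)).symm
  have htt : skewMul S.σ (monomial a γ) (monomial a γ) = 0 := by
    rw [skewMul_monomial_monomial, S.mul_eq_zero_of_e_mul (S.e_mul_pow_map hγ a) hγ hne, map_zero]
  have hs := S.proj_skewMul_monomial (hπ ▸ hγ) g
  set s := skewMul S.σ (monomial a γ) g
  have hs_eq : s = skewMul S.σ (monomial a γ) (S.proj l g) := (S.skewMul_monomial_proj hγ g).symm
  have hs_deg : s.natDegree ≤ d + a := by
    rw [hs_eq, add_comm]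
    exact natDegree_skewMul_le_of_le _ (natDegree_monomial_le γ) le_rfl
  have hs_coeff : s.coeff (d + a) = c := by
    rw [hs_eq, add_comm, coeff_skewMul_of_natDegree_le _ (natDegree_monomial_le γ) le_rfl,
      coeff_natDegree,
      hnor l hl, coeff_monomial, if_pos rfl, AlgEquiv.apply_symm_apply, mul_comm, lmIndex, hc]
  refine ⟨g - s, skewSpan_sub_skewMul S.σ htt g, fun k' hk' => ?_, fun n hn => ?_, ?_⟩
  · rw [S.proj_sub, hs, if_neg hk', sub_zero]
  · rw [S.proj_sub, hs, if_pos rfl, coeff_sub, coeff_eq_zero_of_natDegree_lt (hs_deg.trans_lt hn),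
      sub_zero]
  · rw [S.proj_sub, hs, if_pos rfl, coeff_sub, hs_coeff, sub_self]

noncomputable def weight (g : A[X]) : ℕ := ∑ k, ∑ n ∈ (S.proj k g).support, 2 ^ n

theorem exists_weight_lt {g : A[X]} (hnor : S.IsNormalized g) {k l : Fin r} {μ : ℕ}
    (h : S.Reducible g k l μ) :
    ∃ g', skewSpan S.σ g' = skewSpan S.σ g ∧ S.weight g' < S.weight g := by
  obtain ⟨g', hspan, hother, hhigh, hzero⟩ := S.exists_reduction_step hnor h
  have hk := sum_two_pow_support_lt h.2.1 hzero hhigh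
  refine ⟨g', hspan, Finset.sum_lt_sum (fun k' _ => ?_) ⟨k, Finset.mem_univ k, hk⟩⟩
  rcases eq_or_ne k' k with rfl | hk'
  · exact hk.le
  · rw [hother k' hk']

theorem support_proj_skewMul_C {b : A} (hb : IsUnit b) (g : A[X]) (k : Fin r) :
    (S.proj k (skewMul S.σ (C b) g)).support = (S.proj k g).support := by
  ext n
  rw [mem_support_iff, mem_support_iff, proj_skewMul_C, coeff_skewMul_C_left, Ne,
    (hb.map (S.σ ^ n)).mul_right_eq_zero]

theorem weight_skewMul_C {b : A} (hb : IsUnit b) (g : A[X]) :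
    S.weight (skewMul S.σ (C b) g) = S.weight g := by
  simp only [weight, S.support_proj_skewMul_C hb]

theorem skewSpan_skewMul_C {b : A} (hb : IsUnit b) (g : A[X]) :
    skewSpan S.σ (skewMul S.σ (C b) g) = skewSpan S.σ g :=
  skewSpan_skewMul_of_mul_eq_one S.σ (by rw [skewMul_C_C, hb.val_inv_mul, C_1]) g

theorem exists_isUnit_isNormalized (g : A[X]) :
    ∃ b, IsUnit b ∧ S.IsNormalized (skewMul S.σ (C b) g) := by
  set x : Fin r → A := fun k => (S.σ ^ (S.proj k g).natDegree).symm (S.proj k g).leadingCoeff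
  obtain ⟨b, hb, hbx⟩ :=
    S.exists_isUnit_mul_eq x fun k => S.e_mul_pow_symm (S.e_lmIndex_mul_leadingCoeff g k)
  refine ⟨b, hb, fun k hk => ?_⟩
  have hsupp := S.support_proj_skewMul_C hb g k
  have hdeg := natDegree_eq_of_support_eq hsupp
  have hk : S.proj k g ≠ 0 := fun h =>
    hk (support_eq_empty.mp (hsupp.trans (support_eq_empty.mpr h)))
  have hxk : x k ≠ 0 :=
    (map_ne_zero_iff _ (S.σ ^ _).symm.injective).mpr (leadingCoeff_ne_zero.mpr hk)
  rw [leadingCoeff, lmIndex, hdeg, proj_skewMul_C, coeff_skewMul_C_left, coeff_natDegree,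
    ← AlgEquiv.apply_symm_apply (S.σ ^ _) (S.proj k g).leadingCoeff, ← map_mul, hbx k hxk,
    S.pow_map_e]

theorem exists_isReduced_isNormalized (g₀ : A[X]) :
    ∃ g, skewSpan S.σ g = skewSpan S.σ g₀ ∧ S.IsReduced g ∧ S.IsNormalized g := by
  obtain ⟨g, hg, hmin⟩ :=
    (measure S.weight).wf.has_min {g | skewSpan S.σ g = skewSpan S.σ g₀} ⟨g₀, rfl⟩
  obtain ⟨b, hb, hnor⟩ := S.exists_isUnit_isNormalized g
  have hspan := (S.skewSpan_skewMul_C hb g).trans hg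
  refine ⟨_, hspan, fun k l μ hred => ?_, hnor⟩
  obtain ⟨g', hg', hlt⟩ := S.exists_weight_lt hnor hred
  rw [S.weight_skewMul_C hb] at hlt
  exact hmin g' (hg'.trans hspan) hlt

/-! ### `LeftReduced` and `Normalized` -/

theorem skewMul_C_e (k : Fin r) (g : A[X]) : skewMul S.σ (C (S.e k)) g = S.proj k g := rfl

theorem exists_eq_mul_e_iff {i j : Fin r} {x : A} (hx : S.e i * x = x) (hx0 : x ≠ 0) :
    (∃ b, x = b * S.e j) ↔ i = j := by
  constructor
  · rintro ⟨b, hb⟩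
    refine S.eq_of_e_mul_ne_zero (by rwa [hx]) ?_
    rw [hb, mul_comm b, ← mul_assoc, S.e_mul_self]
  · rintro rfl
    exact ⟨x, by rw [mul_comm, hx]⟩

theorem e_mul_coeff_proj_ne_zero_iff {g : A[X]} {j k : Fin r} {μ : ℕ} :
    S.e j * (S.proj k g).coeff μ ≠ 0 ↔ (S.proj k g).coeff μ ≠ 0 ∧ j = (S.π ^ μ) k := by
  constructor
  · intro h
    exact ⟨right_ne_zero_of_mul h, S.eq_of_e_mul_ne_zero h (S.e_mul_coeff_proj k g μ)⟩
  · rintro ⟨h, rfl⟩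
    rwa [S.e_mul_coeff_proj]

theorem isLM_proj_iff {g m : A[X]} {l : Fin r} :
    IsLM S.e (S.proj l g) m ↔
      S.proj l g ≠ 0 ∧ m = monomial (S.proj l g).natDegree (S.e (S.lmIndex g l)) := by
  have hlm := S.e_lmIndex_mul_leadingCoeff g l
  constructor
  · rintro ⟨j, rfl, hj, -⟩
    refine ⟨leadingCoeff_ne_zero.mp (right_ne_zero_of_mul hj), ?_⟩
    rw [S.eq_of_e_mul_ne_zero hj hlm]
  · rintro ⟨hl, rfl⟩
    exact ⟨_, rfl, by rwa [hlm, Ne, leadingCoeff_eq_zero],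
      fun l' hl' => S.e_mul_eq_zero_of_ne hlm (ne_of_gt hl')⟩

theorem normalized_iff (g : A[X]) : Normalized S.σ S.e g ↔ S.IsNormalized g := by
  simp only [Normalized, skewMul_C_e]
  refine forall_congr' fun k => imp_congr_right fun hk => ⟨fun ⟨j, hj⟩ => ?_, fun h => ⟨_, h⟩⟩
  have hlc : S.e j * (S.proj k g).leadingCoeff ≠ 0 := by
    rw [hj, S.e_mul_self, ← hj]
    exact leadingCoeff_ne_zero.mpr hk
  rw [hj, S.eq_of_e_mul_ne_zero hlc (S.e_lmIndex_mul_leadingCoeff g k)]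

theorem leftReduced_iff (g : A[X]) : LeftReduced S.σ S.e g ↔ S.IsReduced g := by
  simp only [LeftReduced, skewMul_C_e]
  constructor
  · rintro hg k l μ ⟨hkl, hc, hl, hdμ, hidx⟩
    have hk : S.proj k g ≠ 0 := fun h => hc (by rw [h, coeff_zero])
    refine hg k l hkl hk hl μ _ (by rwa [S.e_mul_coeff_proj]) _ (S.isLM_proj_iff.mpr ⟨hl, rfl⟩) ?_
    rw [S.e_mul_coeff_proj]
    exact (exists_monomial_eq_skewMul_monomial_iff S.σ hc).mpr
      ⟨hdμ, (S.exists_eq_mul_e_iff (S.e_mul_coeff_proj k g μ) hc).mpr hidx⟩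
  · intro hg k l hkl _ hl μ j hj m hm hdvd
    obtain ⟨hc, rfl⟩ := S.e_mul_coeff_proj_ne_zero_iff.mp hj
    obtain ⟨-, rfl⟩ := S.isLM_proj_iff.mp hm
    rw [S.e_mul_coeff_proj] at hdvd
    obtain ⟨hdμ, hb⟩ := (exists_monomial_eq_skewMul_monomial_iff S.σ hc).mp hdvd
    exact hg k l μ ⟨hkl, hc, hl, hdμ, (S.exists_eq_mul_e_iff (S.e_mul_coeff_proj k g μ) hc).mp hb⟩

end FieldSplitting

section ProductOfFields

variable {r : ℕ} {K : Fin r → Type*} [∀ k, Field (K k)]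

theorem Pi.eq_one_of_isIdempotentElem {z : ∀ k, K k} (hz : IsIdempotentElem z) {k : Fin r}
    (hk : z k ≠ 0) : z k = 1 :=
  (IsIdempotentElem.iff_eq_zero_or_one.mp (hz.map (Pi.evalRingHom K k))).resolve_left hk

theorem Pi.eq_single_one_of_mul_eq {z : ∀ k, K k} (hz : IsIdempotentElem z) {k : Fin r}
    (hzk : z * Pi.single k 1 = z) (hz0 : z ≠ 0) : z = Pi.single k 1 := by
  have hi : ∀ i, i ≠ k → z i = 0 := fun i hi => by
    rw [← hzk, Pi.mul_apply, Pi.single_eq_of_ne hi, mul_zero]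
  have hk : z k ≠ 0 := fun h => hz0 (funext fun i => by
    rcases eq_or_ne i k with rfl | hi'
    exacts [h, hi i hi'])
  funext i
  rcases eq_or_ne i k with rfl | hi'
  · rw [Pi.eq_one_of_isIdempotentElem hz hk, Pi.single_eq_same]
  · rw [hi i hi', Pi.single_eq_of_ne hi']

theorem Pi.exists_mul_single_one {z : ∀ k, K k} (hz : IsIdempotentElem z) (hz0 : z ≠ 0) :
    ∃ j, z * Pi.single j 1 = Pi.single j 1 := by
  obtain ⟨j, hj⟩ := Function.ne_iff.mp hz0
  exact ⟨j, by rw [← Pi.single_mul_right, Pi.eq_one_of_isIdempotentElem hz hj, one_mul]⟩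

theorem Pi.exists_mul_eq_single_one {j : Fin r} {x : ∀ k, K k} (hx : Pi.single j 1 * x = x)
    (hx0 : x ≠ 0) : ∃ y, Pi.single j 1 * y = y ∧ y * x = Pi.single j 1 := by
  rw [← Pi.single_mul_left, one_mul] at hx
  have hxj : x j ≠ 0 := fun h => hx0 (by rw [← hx, h, Pi.single_zero])
  refine ⟨Pi.single j (x j)⁻¹, by rw [← Pi.single_mul, one_mul], ?_⟩
  nth_rw 2 [← hx]
  rw [← Pi.single_mul, inv_mul_cancel₀ hxj]

variable {F : Type*} [CommSemiring F] [∀ k, Algebra F (K k)]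

/-- `σ⁻¹ (Pi.single j 1)` is a nonzero idempotent below `Pi.single k 1`, hence equal to it. -/
theorem AlgEquiv.exists_map_single_one (σ : (∀ k, K k) ≃ₐ[F] (∀ k, K k)) (k : Fin r) :
    ∃ j, σ (Pi.single k 1) = Pi.single j 1 := by
  have he := (CompleteOrthogonalIdempotents.single K).idem
  have hne : ∀ j, (Pi.single j 1 : ∀ k, K k) ≠ 0 := fun j => Pi.single_ne_zero_iff.mpr one_ne_zero
  obtain ⟨j, hj⟩ := Pi.exists_mul_single_one ((he k).map σ)
    ((map_ne_zero_iff _ σ.injective).mpr (hne k))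
  refine ⟨j, (σ.symm_apply_eq.mp (Pi.eq_single_one_of_mul_eq ((he j).map σ.symm) ?_
    ((map_ne_zero_iff _ σ.symm.injective).mpr (hne j)))).symm⟩
  rw [← σ.symm_apply_apply (Pi.single k 1), ← map_mul, mul_comm, hj]

theorem AlgEquiv.exists_perm_map_single_one (σ : (∀ k, K k) ≃ₐ[F] (∀ k, K k)) :
    ∃ π : Equiv.Perm (Fin r), ∀ k, σ (Pi.single k 1) = Pi.single (π k) 1 := by
  choose f hf using σ.exists_map_single_one
  have hinj : Function.Injective f := fun k k' h => by
    by_contra hne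
    have := congrFun (σ.injective ((hf k).trans (h ▸ (hf k').symm))) k
    rw [Pi.single_eq_same, Pi.single_eq_of_ne hne] at this
    exact one_ne_zero this
  exact ⟨Equiv.ofBijective f (Finite.injective_iff_bijective.mp hinj), hf⟩

end ProductOfFields

noncomputable def FieldSplitting.pi {F : Type*} [Field F] {r : ℕ} {K : Fin r → Type*}
    [∀ k, Field (K k)] [∀ k, Algebra F (K k)] (σ : (∀ k, K k) ≃ₐ[F] (∀ k, K k)) :
    FieldSplitting F (∀ k, K k) r where
  σ := σ
  e k := Pi.single k 1
  complete := CompleteOrthogonalIdempotents.single K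
  π := σ.exists_perm_map_single_one.choose
  map_e := σ.exists_perm_map_single_one.choose_spec
  exists_inv _ _ := Pi.exists_mul_eq_single_one

theorem stmt_10_general (F : Type) [Field F] (r : ℕ) (K : Fin r → Type)
    [∀ k, Field (K k)] [∀ k, Algebra F (K k)]
    (σ : (∀ k, K k) ≃ₐ[F] (∀ k, K k))
    (e : Fin r → (∀ k, K k)) (he : ∀ k, e k = Pi.single k 1)
    (J : Set (Polynomial (∀ k, K k)))
    (hprinc : ∃ g : Polynomial (∀ k, K k), J = {f | ∃ u, f = skewMul σ u g}) :
    ∃! g : Polynomial (∀ k, K k),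
      J = {f | ∃ u, f = skewMul σ u g} ∧ LeftReduced σ e g ∧ Normalized σ e g := by
  obtain rfl : e = fun k => Pi.single k 1 := funext he
  let S := FieldSplitting.pi σ
  obtain ⟨g₀, rfl⟩ := hprinc
  obtain ⟨g, hg, hred, hnor⟩ := S.exists_isReduced_isNormalized g₀
  refine ⟨g, ⟨hg.symm, (S.leftReduced_iff g).mpr hred, (S.normalized_iff g).mpr hnor⟩, ?_⟩
  rintro g' ⟨hg', hred', hnor'⟩
  exact S.eq_of_skewSpan_eq (hg'.symm.trans hg.symm) ((S.leftReduced_iff g').mp hred')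
    ((S.normalized_iff g').mp hnor') hred hnor

/-- every delay-free principal left ideal of R = A[z;σ] (A a finite product
of field extensions of F) has a unique left-reduced and normalized generator. -/
theorem stmt_10 (F : Type) [Field F] (r : ℕ) (K : Fin r → Type)
    [∀ k, Field (K k)] [∀ k, Algebra F (K k)]
    (σ : (∀ k, K k) ≃ₐ[F] (∀ k, K k))
    (e : Fin r → (∀ k, K k)) (he : ∀ k, e k = Pi.single k 1)
    (J : Set (Polynomial (∀ k, K k)))
    (hzero : (0 : Polynomial (∀ k, K k)) ∈ J)
    (hadd : ∀ a ∈ J, ∀ b ∈ J, a + b ∈ J)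
    (hmul : ∀ (f : Polynomial (∀ k, K k)), ∀ a ∈ J, skewMul σ f a ∈ J)
    (hdf : ∀ (k : ℕ) (a : Polynomial (∀ k, K k)),
        skewMul σ (Polynomial.X ^ k) a ∈ J → a ∈ J)
    (hprinc : ∃ g : Polynomial (∀ k, K k), J = {f | ∃ u, f = skewMul σ u g}) :
    ∃! g : Polynomial (∀ k, K k),
      J = {f | ∃ u, f = skewMul σ u g} ∧ LeftReduced σ e g ∧ Normalized σ e g :=
  stmt_10_general F r K σ e he J hprinc
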